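/- arXiv:1107.2855 — 3 statements merged into one kernel-verified Lean document; each statement's English description precedes it below -/
import Mathlib

section
/- For all integers m ≥ 2 and k ≥ 1, ∑_{j=k}^{m−1} P_{m,m−j} ≤ P(V ≥ k); that is, the first jump of the block-counting chain started from m is stochastically dominated by V. -/
open scoped Classical

noncomputable section

/-- The Euler Beta function `B(x,y) = Γ(x)Γ(y)/Γ(x+y)`. -/
def betaR (x y : ℝ) : ℝ := Real.Gamma x * Real.Gamma y / Real.Gamma (x + y)

/-- The coalescence rate `ρ_{m,m-k+1}` of the Beta(2-α,α)-coalescent. -/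
def collRate (α : ℝ) (m k : ℕ) : ℝ :=
  (1 / (Real.Gamma (2 - α) * Real.Gamma α)) * (m.choose k) *
    betaR ((k : ℝ) - α) ((m : ℝ) - (k : ℝ) + α)

/-- The merging rate `ρ_{m,l}` from `m` blocks to `l` blocks (here `l = m-k+1`,
i.e. `k = m-l+1` blocks merge into one). -/
def rateML (α : ℝ) (m l : ℕ) : ℝ := collRate α m (m - l + 1)

/-- The total merging rate `ρ_m = ∑_{l=1}^{m-1} ρ_{m,l}`. -/
def totalRate (α : ℝ) (m : ℕ) : ℝ := ∑ l ∈ Finset.Ico 1 m, rateML α m l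

/-- The jump probability `P_{m,l} = ρ_{m,l}/ρ_m`. -/
def jumpProb (α : ℝ) (m l : ℕ) : ℝ := rateML α m l / totalRate α m

/-- The probability mass function of `V`: `P(V = k) = (α/Γ(2-α)) Γ(k+1-α)/Γ(k+2)`, `k ≥ 1`. -/
def Vpmf (α : ℝ) (k : ℕ) : ℝ :=
  α / Real.Gamma (2 - α) * (Real.Gamma ((k : ℝ) + 1 - α) / Real.Gamma ((k : ℝ) + 2))

/-- The tail `P(V ≥ k)` of `V`. -/
def Vge (α : ℝ) (k : ℕ) : ℝ := ∑' j : ℕ, if k ≤ j ∧ 1 ≤ j then Vpmf α j else 0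

/-!
Write `s(i) = C(m,i) Γ(i-α) Γ(m-i+α)` and `S(k) = ∑_{k ≤ i ≤ m} s(i)`, so that the first
jump removes at least `k` blocks with probability `S(k+1)/S(2)`, and `F(x) = Γ(x-α)/Γ(x)`, so
that `P(V ≥ k) = F(k+1)/F(2)` by telescoping. As `F(k+1) = (k-α)/k · F(k)`, it suffices to
compare hazard rates: `S(k+1) ≤ (k-α)/k · S(k)`, i.e. `α S(k+1) ≤ (k-α) s(k)`. Since `α ≥ 1`,
`s(i+1)/s(i) = (m-i)(i-α) / ((i+1)(m-i-1+α)) ≤ (i-α)/(i+1)`, and the comparison follows by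
downward induction on `k`:
`α S(k+1) ≤ α s(k+1) + (k+1-α) s(k+1) = (k+1) s(k+1) ≤ (k-α) s(k)`.
-/

open Finset Filter Topology

namespace BetaCoalescent

def gammaRatio (α x : ℝ) : ℝ := Real.Gamma (x - α) / Real.Gamma x

section GammaRatio

variable {α x : ℝ}

lemma gammaRatio_pos (hx : α < x) (hα : 0 ≤ α) : 0 < gammaRatio α x :=
  div_pos (Real.Gamma_pos_of_pos (by linarith)) (Real.Gamma_pos_of_pos (by linarith))

lemma gammaRatio_two : gammaRatio α 2 = Real.Gamma (2 - α) := by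
  simp [gammaRatio]

lemma gammaRatio_add_one (hxα : x - α ≠ 0) (hx : x ≠ 0) :
    gammaRatio α (x + 1) = (x - α) / x * gammaRatio α x := by
  rw [gammaRatio, gammaRatio, add_sub_right_comm, Real.Gamma_add_one hxα, Real.Gamma_add_one hx]
  field_simp

lemma gammaRatio_sub_gammaRatio_add_one (hxα : x - α ≠ 0) (hx : x ≠ 0) :
    gammaRatio α x - gammaRatio α (x + 1) = α * (Real.Gamma (x - α) / Real.Gamma (x + 1)) := by
  rw [gammaRatio_add_one hxα hx, gammaRatio, Real.Gamma_add_one hx]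
  field_simp
  ring

lemma gammaRatio_add_one_le (hα : 0 ≤ α) (hx : α < x) :
    gammaRatio α (x + 1) ≤ gammaRatio α x := by
  have hdiff := gammaRatio_sub_gammaRatio_add_one (α := α) (x := x) (by linarith) (by linarith)
  have : 0 ≤ α * (Real.Gamma (x - α) / Real.Gamma (x + 1)) :=
    mul_nonneg hα (div_nonneg (Real.Gamma_pos_of_pos (by linarith)).le
      (Real.Gamma_pos_of_pos (by linarith)).le)
  linarith

lemma gammaRatio_le_inv_sub_one (hα : 1 ≤ α) (hx : α + 2 ≤ x) :
    gammaRatio α x ≤ (x - 1)⁻¹ := by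
  have hΓ : Real.Gamma (x - α) ≤ Real.Gamma (x - 1) :=
    Real.Gamma_strictMonoOn_Ici.monotoneOn (by simp; linarith) (by simp; linarith) (by linarith)
  have hx1 : x - 1 ≠ 0 := by linarith
  have hΓx : Real.Gamma x = (x - 1) * Real.Gamma (x - 1) := by
    simpa using Real.Gamma_add_one hx1
  rw [gammaRatio, hΓx, div_le_iff₀ (mul_pos (by linarith) (Real.Gamma_pos_of_pos (by linarith))),
    inv_mul_cancel_left₀ hx1]
  exact hΓ

lemma tendsto_gammaRatio_natCast (hα : 1 ≤ α) :
    Tendsto (fun n : ℕ => gammaRatio α n) atTop (𝓝 0) := by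
  have hcast := tendsto_natCast_atTop_atTop (R := ℝ)
  have hlim : Tendsto (fun n : ℕ => ((n : ℝ) - 1)⁻¹) atTop (𝓝 0) :=
    (tendsto_atTop_add_const_right _ (-1) hcast).inv_tendsto_atTop
  refine squeeze_zero' ?_ ?_ hlim
  · filter_upwards [hcast.eventually_ge_atTop (α + 1)] with n hn
    exact (gammaRatio_pos (by linarith) (by linarith)).le
  · filter_upwards [hcast.eventually_ge_atTop (α + 2)] with n hn
    exact gammaRatio_le_inv_sub_one hα hn

end GammaRatio

lemma hasSum_sub_succ_of_antitone {G : ℕ → ℝ} (hG : Antitone G)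
    (hlim : Tendsto G atTop (𝓝 0)) :
    HasSum (fun n => G n - G (n + 1)) (G 0) := by
  rw [hasSum_iff_tendsto_nat_of_nonneg fun n => sub_nonneg.2 (hG n.le_succ)]
  simp only [Finset.sum_range_sub']
  simpa using tendsto_const_nhds.sub hlim

section VTail

variable {α : ℝ}

lemma Vpmf_eq_sub (hα2 : α < 2) {j : ℕ} (hj : 1 ≤ j) :
    Vpmf α j = (gammaRatio α (j + 1) - gammaRatio α (j + 1 + 1)) / gammaRatio α 2 := by
  have hj' : (1 : ℝ) ≤ j := by exact_mod_cast hj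
  rw [gammaRatio_sub_gammaRatio_add_one (by linarith) (by linarith), gammaRatio_two, Vpmf]
  ring_nf

lemma Vge_eq_gammaRatio_div (hα1 : 1 < α) (hα2 : α < 2) {k : ℕ} (hk : 1 ≤ k) :
    Vge α k = gammaRatio α (k + 1) / gammaRatio α 2 := by
  set G : ℕ → ℝ := fun n => gammaRatio α (n + k + 1)
  have hG : Antitone G := antitone_nat_of_succ_le fun n => by
    have : (1 : ℝ) ≤ k := by exact_mod_cast hk
    have : (0 : ℝ) ≤ n := n.cast_nonneg
    simpa [G, add_right_comm _ (1 : ℝ)] using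
      gammaRatio_add_one_le (x := n + k + 1) (by linarith) (by linarith)
  have hlim : Tendsto G atTop (𝓝 0) := by
    refine ((tendsto_gammaRatio_natCast hα1.le).comp (tendsto_add_atTop_nat (k + 1))).congr
      fun n => ?_
    simp [G, add_assoc]
  have hsum := (hasSum_sub_succ_of_antitone hG hlim).div_const (gammaRatio α 2)
  rw [Vge]
  refine ((hasSum_nat_add_iff' k).1 ?_).tsum_eq
  have hhead : ∑ i ∈ range k, (if k ≤ i ∧ 1 ≤ i then Vpmf α i else 0) = 0 :=
    sum_eq_zero fun i hi => if_neg fun h => by simp at hi; omega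
  rw [hhead, sub_zero]
  have hG0 : G 0 = gammaRatio α (k + 1) := by simp [G]
  refine hG0 ▸ hsum.congr_fun fun n => ?_
  rw [if_pos (by omega), Vpmf_eq_sub hα2 (by omega)]
  simp only [G]
  push_cast
  ring_nf

end VTail

/-- `mergeWeight α m i` vanishes for `i > m`, so the recursions below need no upper bound
on `i`. -/
def mergeWeight (α : ℝ) (m i : ℕ) : ℝ :=
  m.choose i * Real.Gamma (i - α) * Real.Gamma (m - i + α)

def mergeTail (α : ℝ) (m k : ℕ) : ℝ := ∑ i ∈ Icc k m, mergeWeight α m i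

section MergeWeight

variable {α : ℝ} {m : ℕ}

lemma mergeWeight_nonneg (hα : 0 < α) {i : ℕ} (hi : α < i) : 0 ≤ mergeWeight α m i := by
  rcases le_or_gt i m with him | hmi
  · have : (i : ℝ) ≤ m := by exact_mod_cast him
    unfold mergeWeight
    have := Real.Gamma_pos_of_pos (s := i - α) (by linarith)
    have := Real.Gamma_pos_of_pos (s := m - i + α) (by linarith)
    positivity
  · simp [mergeWeight, Nat.choose_eq_zero_of_lt hmi]

lemma mergeTail_nonneg (hα : 0 < α) {k : ℕ} (hk : α < k) : 0 ≤ mergeTail α m k :=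
  sum_nonneg fun i hi => mergeWeight_nonneg hα <| hk.trans_le <| by
    exact_mod_cast (mem_Icc.1 hi).1

lemma mergeTail_eq_add_mergeTail_succ (α : ℝ) (m k : ℕ) :
    mergeTail α m k = mergeWeight α m k + mergeTail α m (k + 1) := by
  rcases le_or_gt k m with hkm | hmk
  · rw [mergeTail, mergeTail, Icc_eq_cons_Ioc hkm, sum_cons, Icc_add_one_left_eq_Ioc]
  · simp [mergeTail, mergeWeight, Nat.choose_eq_zero_of_lt hmk, Icc_eq_empty_of_lt hmk,
      Icc_eq_empty_of_lt (hmk.trans k.lt_succ_self)]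

lemma succ_mul_mergeWeight_succ (α : ℝ) {i : ℕ} (him : i < m) (hiα : (i : ℝ) - α ≠ 0)
    (hmi : (m : ℝ) - i - 1 + α ≠ 0) :
    (i + 1) * (m - i - 1 + α) * mergeWeight α m (i + 1) =
      (m - i) * (i - α) * mergeWeight α m i := by
  have hchoose : (m.choose (i + 1) : ℝ) * (i + 1) = m.choose i * (m - i) := by
    have := congrArg (Nat.cast (R := ℝ)) (Nat.choose_succ_right_eq m i)
    push_cast [him.le] at this
    exact this
  have hΓi : Real.Gamma ((i + 1 : ℕ) - α) = (i - α) * Real.Gamma (i - α) := by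
    rw [← Real.Gamma_add_one hiα]; push_cast; ring_nf
  have hΓmi : Real.Gamma (m - i + α) = (m - i - 1 + α) * Real.Gamma (m - i - 1 + α) := by
    rw [← Real.Gamma_add_one hmi]; ring_nf
  rw [mergeWeight, mergeWeight, hΓi, hΓmi]
  push_cast
  rw [show (m : ℝ) - (i + 1) + α = m - i - 1 + α by ring]
  linear_combination
    (i - α) * Real.Gamma (i - α) * (m - i - 1 + α) * Real.Gamma (m - i - 1 + α) * hchoose

lemma succ_mul_mergeWeight_succ_le (hα : 1 ≤ α) {i : ℕ} (hi : α < i) :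
    (i + 1) * mergeWeight α m (i + 1) ≤ (i - α) * mergeWeight α m i := by
  have hs := mul_nonneg (sub_nonneg.2 hi.le) (mergeWeight_nonneg (m := m) (by linarith) hi)
  rcases lt_or_ge i m with him | hmi
  · have hm : (i : ℝ) + 1 ≤ m := by exact_mod_cast him
    have hA : 0 < (m : ℝ) - i - 1 + α := by linarith
    refine le_of_mul_le_mul_right ?_ hA
    calc (i + 1) * mergeWeight α m (i + 1) * (m - i - 1 + α)
        = (m - i) * ((i - α) * mergeWeight α m i) := by
          rw [← mul_assoc, ← succ_mul_mergeWeight_succ α him (by linarith) hA.ne']; ring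
      _ ≤ (m - i - 1 + α) * ((i - α) * mergeWeight α m i) := by gcongr; linarith
      _ = (i - α) * mergeWeight α m i * (m - i - 1 + α) := by ring
  · simpa [mergeWeight, Nat.choose_eq_zero_of_lt (Nat.lt_succ_of_le hmi)] using hs

lemma mul_mergeTail_succ_le (hα : 1 ≤ α) {k : ℕ} (hk : α < k) :
    α * mergeTail α m (k + 1) ≤ (k - α) * mergeWeight α m k := by
  induction hd : m - k generalizing k with
  | zero =>
    have : mergeTail α m (k + 1) = 0 := by
      rw [mergeTail, Icc_eq_empty_of_lt (by omega), sum_empty]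
    rw [this, mul_zero]
    exact mul_nonneg (sub_nonneg.2 hk.le) (mergeWeight_nonneg (by linarith) hk)
  | succ d ih =>
    have hk1 : α < (k + 1 : ℕ) := by push_cast; linarith
    have htail := ih hk1 (by omega)
    push_cast at htail
    rw [mergeTail_eq_add_mergeTail_succ]
    linarith [succ_mul_mergeWeight_succ_le (m := m) hα hk]

lemma mergeTail_succ_le (hα : 1 ≤ α) {k : ℕ} (hk : α < k) :
    mergeTail α m (k + 1) ≤ (k - α) / k * mergeTail α m k := by
  have hk0 : (0 : ℝ) < k := by linarith
  rw [div_mul_eq_mul_div, le_div_iff₀ hk0, mergeTail_eq_add_mergeTail_succ α m k]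
  linarith [mul_mergeTail_succ_le (m := m) hα hk]

lemma mergeTail_div_gammaRatio_succ_le (hα : 1 ≤ α) {k : ℕ} (hk : α < k) :
    mergeTail α m (k + 1) / gammaRatio α (k + 1 : ℕ) ≤
      mergeTail α m k / gammaRatio α k := by
  have hk0 : (0 : ℝ) < k := by linarith
  have hc : 0 < (k - α) / k := div_pos (by linarith) hk0
  calc mergeTail α m (k + 1) / gammaRatio α (k + 1 : ℕ)
      = mergeTail α m (k + 1) / ((k - α) / k * gammaRatio α k) := by
        push_cast; rw [gammaRatio_add_one (by linarith) hk0.ne']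
    _ ≤ (k - α) / k * mergeTail α m k / ((k - α) / k * gammaRatio α k) := by
        have := gammaRatio_pos hk (by linarith)
        gcongr
        exact mergeTail_succ_le hα hk
    _ = mergeTail α m k / gammaRatio α k := mul_div_mul_left _ _ hc.ne'

lemma mergeTail_div_mergeTail_two_le (hα1 : 1 ≤ α) (hα2 : α < 2) {n : ℕ} (hn : 2 ≤ n) :
    mergeTail α m n / mergeTail α m 2 ≤ gammaRatio α n / gammaRatio α 2 := by
  have hn' : α < n := hα2.trans_le (by exact_mod_cast hn)
  have hanti : AntitoneOn (fun n : ℕ => mergeTail α m n / gammaRatio α n) (Set.Ici 2) :=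
    antitoneOn_nat_Ici_of_succ_le fun k hk =>
      mergeTail_div_gammaRatio_succ_le hα1 (hα2.trans_le (by exact_mod_cast hk))
  have hle : mergeTail α m n / gammaRatio α n ≤ mergeTail α m 2 / gammaRatio α 2 := by
    exact_mod_cast hanti Set.self_mem_Ici hn hn
  have hFn := gammaRatio_pos hn' (by linarith)
  have hF2 := gammaRatio_pos hα2 (by linarith)
  refine div_le_of_le_mul₀ (mergeTail_nonneg (by linarith) hα2) (by positivity) ?_
  calc mergeTail α m n = mergeTail α m n / gammaRatio α n * gammaRatio α n := by field_simp
    _ ≤ mergeTail α m 2 / gammaRatio α 2 * gammaRatio α n := by gcongr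
    _ = gammaRatio α n / gammaRatio α 2 * mergeTail α m 2 := by ring

end MergeWeight

lemma collRate_eq_mergeWeight_div (α : ℝ) (m i : ℕ) :
    collRate α m i =
      mergeWeight α m i / (Real.Gamma (2 - α) * Real.Gamma α * Real.Gamma m) := by
  rw [collRate, betaR, mergeWeight, show (i : ℝ) - α + (m - i + α) = m by ring]
  ring

lemma sum_rateML_eq_mergeTail_div (α : ℝ) {m : ℕ} (hm : 1 ≤ m) (k : ℕ) :
    ∑ j ∈ Icc k (m - 1), rateML α m (m - j) =
      mergeTail α m (k + 1) / (Real.Gamma (2 - α) * Real.Gamma α * Real.Gamma m) := by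
  have hIcc : Icc k (m - 1) = Ico k m := by ext; simp; omega
  rw [mergeTail, sum_div, ← Ico_add_one_right_eq_Icc (k + 1) m, ← sum_Ico_add', hIcc]
  refine sum_congr rfl fun j hj => ?_
  rw [rateML, collRate_eq_mergeWeight_div, show m - (m - j) + 1 = j + 1 by simp at hj; omega]

lemma totalRate_eq_sum_rateML (α : ℝ) (m : ℕ) :
    totalRate α m = ∑ j ∈ Icc 1 (m - 1), rateML α m (m - j) := by
  rw [totalRate, show Icc 1 (m - 1) = Ico 1 m by ext; simp; omega,
    sum_Ico_reflect (rateML α m) 1 m.le_succ]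
  simp

lemma sum_jumpProb_eq_mergeTail_div {α : ℝ} {m : ℕ} (hα0 : 0 < α) (hα2 : α < 2) (hm : 1 ≤ m)
    (k : ℕ) :
    ∑ j ∈ Icc k (m - 1), jumpProb α m (m - j) = mergeTail α m (k + 1) / mergeTail α m 2 := by
  have hc : Real.Gamma (2 - α) * Real.Gamma α * Real.Gamma m ≠ 0 := by
    have := Real.Gamma_pos_of_pos (s := 2 - α) (by linarith)
    have := Real.Gamma_pos_of_pos hα0
    have := Real.Gamma_pos_of_pos (s := m) (by exact_mod_cast hm)
    positivity
  simp only [jumpProb, ← sum_div]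
  rw [totalRate_eq_sum_rateML, sum_rateML_eq_mergeTail_div α hm, sum_rateML_eq_mergeTail_div α hm,
    div_div_div_cancel_right₀ hc]

end BetaCoalescent

open BetaCoalescent

/-- For all integers `m ≥ 2` and `k ≥ 1`, `∑_{j=k}^{m-1} P_{m,m-j} ≤ P(V ≥ k)`:
the first jump of the block-counting chain started from `m` is stochastically dominated
by `V`. -/
theorem first_jump_dominated (α : ℝ) (hα1 : 1 < α) (hα2 : α < 2) (m k : ℕ)
    (hm : 2 ≤ m) (hk : 1 ≤ k) :
    ∑ j ∈ Finset.Icc k (m - 1), jumpProb α m (m - j) ≤ Vge α k := by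
  rw [sum_jumpProb_eq_mergeTail_div (by linarith) hα2 (by omega),
    Vge_eq_gammaRatio_div hα1 hα2 hk]
  exact_mod_cast mergeTail_div_mergeTail_two_le hα1.le hα2 (show 2 ≤ k + 1 by omega)
end
end

section
/- For every integer m ≥ 2, ∑_{k=1}^{∞} (P(V = k) − P_{m,m−k})^+ ≤ 1/((α−1)·m), where x^+ = max(x,0) and with the convention P_{m,m−k} = 0 for k ≥ m. In particular the total variation distance between the law of V and the first-jump law of the chain from m is at most 1/((α−1)·m). -/
open scoped Classical

noncomputable section

/-!
Everything is expressed through the ratios `Γ(k + a) / Γ(k + 1)`. Comparing coefficients in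
`(1 - x)^(-α) (1 - x)^α = 1` evaluates the total rate `ρ_m`, and then
`P_{m,m-k} = P(V = k) · m/(m-1) · (Γ(n-1+α)/Γ(n)) / (Γ(m-1+α)/Γ(m))` with `n = m - k`.
Since `Γ(j + α)/Γ(j + 2)` decreases in `j`, this is at least `(1 - k/m) P(V = k)`, so
`(P(V = k) - P_{m,m-k})⁺ ≤ k P(V = k) / m` for every `k`, and summing against `E V = 1/(α-1)`
gives the first bound. Both laws have mass one, so they differ on any set by at most the
total positive part of their difference.
-/

open Finset Filter
open scoped Nat

theorem natCast_ne_of_one_lt_of_lt_two {α : ℝ} (hα₁ : 1 < α) (hα₂ : α < 2) (k : ℕ) :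
    (k : ℝ) ≠ α := by
  rintro rfl
  have : 1 < k := by exact_mod_cast hα₁
  have : k < 2 := by exact_mod_cast hα₂
  omega

def gammaRatio (a : ℝ) (k : ℕ) : ℝ := Real.Gamma (k + a) / Real.Gamma (k + 1)

namespace gammaRatio

theorem zero (a : ℝ) : gammaRatio a 0 = Real.Gamma a := by
  simp [gammaRatio]

theorem pos {a : ℝ} (ha : 0 < a) (k : ℕ) : 0 < gammaRatio a k := by
  unfold gammaRatio
  have := Real.Gamma_pos_of_pos (by positivity : (0 : ℝ) < k + a)
  have := Real.Gamma_pos_of_pos (by positivity : (0 : ℝ) < k + 1)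
  positivity

theorem succ_mul_succ (a : ℝ) (k : ℕ) :
    (k + 1) * gammaRatio a (k + 1) = gammaRatio (a + 1) k := by
  have hk : (k + 1 : ℝ) ≠ 0 := by positivity
  have hΓ : Real.Gamma (k + 1) ≠ 0 := (Real.Gamma_pos_of_pos (by positivity)).ne'
  simp only [gammaRatio, Nat.cast_succ, Real.Gamma_add_one hk]
  rw [add_right_comm, add_assoc]
  field_simp

theorem add_one {a : ℝ} {k : ℕ} (h : (k : ℝ) + a ≠ 0) :
    gammaRatio (a + 1) k = (k + a) * gammaRatio a k := by
  rw [gammaRatio, gammaRatio, ← add_assoc, Real.Gamma_add_one h, mul_div_assoc]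

theorem succ_mul_succ_eq {a : ℝ} {k : ℕ} (h : (k : ℝ) + a ≠ 0) :
    (k + 1) * gammaRatio a (k + 1) = (k + a) * gammaRatio a k := by
  rw [succ_mul_succ, add_one h]

theorem antitone {a : ℝ} (ha₀ : 0 < a) (ha₁ : a ≤ 1) : Antitone (gammaRatio a) := by
  refine antitone_nat_of_succ_le fun k => ?_
  have hk : (0 : ℝ) < k + 1 := by positivity
  have h := succ_mul_succ_eq (a := a) (k := k) (by positivity)
  have := pos ha₀ k
  rw [← mul_le_mul_iff_of_pos_left hk, h]
  gcongr

theorem succ_mul_le_succ_mul {a : ℝ} (ha₁ : 1 < a) (ha₂ : a ≤ 2) {i j : ℕ}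
    (hij : i ≤ j) :
    (i + 1) * gammaRatio a j ≤ (j + 1) * gammaRatio a i := by
  have hi := succ_mul_succ (a - 1) i
  have hj := succ_mul_succ (a - 1) j
  rw [sub_add_cancel] at hi hj
  have hmono := antitone (a := a - 1) (by linarith) (by linarith) (Nat.succ_le_succ hij)
  rw [← hi, ← hj, mul_left_comm]
  gcongr

end gammaRatio

-- Such `f` and `g` are multiples of the coefficients of `(1 - x)^(-a)` and `(1 - x)^(-b)`.
theorem sum_antidiagonal_succ_mul_of_recursion {f g : ℕ → ℝ} {a b : ℝ}
    (hf : ∀ k : ℕ, (k + 1) * f (k + 1) = (k + a) * f k)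
    (hg : ∀ k : ℕ, (k + 1) * g (k + 1) = (k + b) * g k) (n : ℕ) :
    (n + 1) * ∑ p ∈ antidiagonal (n + 1), f p.1 * g p.2
      = (n + a + b) * ∑ p ∈ antidiagonal n, f p.1 * g p.2 := by
  calc (n + 1) * ∑ p ∈ antidiagonal (n + 1), f p.1 * g p.2
      = ∑ p ∈ antidiagonal (n + 1), (p.1 * f p.1 * g p.2 + f p.1 * (p.2 * g p.2)) := by
        rw [mul_sum]
        refine sum_congr rfl fun p hp => ?_
        have : (p.1 : ℝ) + p.2 = n + 1 := by exact_mod_cast mem_antidiagonal.mp hp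
        rw [← this]
        ring
    _ = ∑ p ∈ antidiagonal n,
          ((p.1 + 1) * f (p.1 + 1) * g p.2 + f p.1 * ((p.2 + 1) * g (p.2 + 1))) := by
        rw [sum_add_distrib, Nat.sum_antidiagonal_succ, Nat.sum_antidiagonal_succ', sum_add_distrib]
        push_cast
        ring
    _ = ∑ p ∈ antidiagonal n, (p.1 + p.2 + a + b) * (f p.1 * g p.2) := by
        refine sum_congr rfl fun p _ => ?_
        rw [hf, hg]
        ring
    _ = (n + a + b) * ∑ p ∈ antidiagonal n, f p.1 * g p.2 := by
        rw [mul_sum]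
        refine sum_congr rfl fun p hp => ?_
        have : (p.1 : ℝ) + p.2 = n := by exact_mod_cast mem_antidiagonal.mp hp
        rw [← this]

theorem sum_antidiagonal_eq_zero_of_recursion {f g : ℕ → ℝ} {a b : ℝ}
    (hf : ∀ k : ℕ, (k + 1) * f (k + 1) = (k + a) * f k)
    (hg : ∀ k : ℕ, (k + 1) * g (k + 1) = (k + b) * g k) (hab : a + b = 0) {n : ℕ}
    (hn : n ≠ 0) :
    ∑ p ∈ antidiagonal n, f p.1 * g p.2 = 0 := by
  have h : ∀ n : ℕ, (n : ℝ) * ∑ p ∈ antidiagonal n, f p.1 * g p.2 = 0 := by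
    intro n
    induction n with
    | zero => simp
    | succ n ih =>
      push_cast
      rw [sum_antidiagonal_succ_mul_of_recursion hf hg, add_assoc, hab, add_zero, ih]
  exact (mul_eq_zero.mp (h n)).resolve_left (by exact_mod_cast hn)

section BetaCoalescent

variable {α : ℝ}

theorem collRate_eq_gammaRatio {m k : ℕ} (hkm : k ≤ m) (hm : m ≠ 0) :
    collRate α m k
      = m * gammaRatio (-α) k * gammaRatio α (m - k) / (Real.Gamma (2 - α) * Real.Gamma α) := by
  obtain ⟨n, rfl⟩ := Nat.exists_eq_succ_of_ne_zero hm
  have hchoose : ((n + 1).choose k : ℝ) = (n + 1)! / (k ! * (n + 1 - k)!) :=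
    Nat.cast_choose ℝ hkm
  have hΓ : Real.Gamma ((k : ℝ) - α + ((n + 1 : ℕ) - k + α)) = n ! := by
    rw [← Real.Gamma_nat_eq_factorial]; push_cast; ring_nf
  have hk : Real.Gamma ((k : ℝ) + 1) = k ! := Real.Gamma_nat_eq_factorial k
  have hnk : Real.Gamma (((n + 1 - k : ℕ) : ℝ) + 1) = (n + 1 - k)! :=
    Real.Gamma_nat_eq_factorial _
  rw [collRate, betaR, gammaRatio, gammaRatio, hchoose, hΓ, hk, hnk, Nat.cast_sub hkm,
    Nat.factorial_succ]
  push_cast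
  field_simp
  ring_nf

theorem totalRate_eq_sum_collRate (α : ℝ) (m : ℕ) :
    totalRate α m = ∑ k ∈ Ico 2 (m + 1), collRate α m k := by
  rw [totalRate, show Ico 2 (m + 1) = Ico (m + 1 + 1 - m) (m + 1 + 1 - 1) by congr 1; omega,
    ← sum_Ico_reflect _ _ (by omega)]
  refine sum_congr rfl fun l hl => ?_
  rw [rateML, show m - l + 1 = m + 1 - l by have := (mem_Ico.mp hl).2; omega]

theorem sum_antidiagonal_gammaRatio_neg_mul_eq_zero (hα₁ : 1 < α) (hα₂ : α < 2) {n : ℕ}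
    (hn : n ≠ 0) : ∑ p ∈ antidiagonal n, gammaRatio (-α) p.1 * gammaRatio α p.2 = 0 :=
  sum_antidiagonal_eq_zero_of_recursion
    (fun k => gammaRatio.succ_mul_succ_eq
      (by rw [← sub_eq_add_neg, sub_ne_zero]
          exact natCast_ne_of_one_lt_of_lt_two hα₁ hα₂ k))
    (fun k => gammaRatio.succ_mul_succ_eq (by positivity)) (neg_add_cancel α) hn

theorem totalRate_succ (hα₁ : 1 < α) (hα₂ : α < 2) (n : ℕ) :
    totalRate α (n + 1) = n * gammaRatio α n / (α * Real.Gamma α) := by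
  have hconv : ∑ k ∈ range (n + 2), gammaRatio (-α) k * gammaRatio α (n + 1 - k) = 0 := by
    rw [← Nat.sum_antidiagonal_eq_sum_range_succ fun i j => gammaRatio (-α) i * gammaRatio α j]
    exact sum_antidiagonal_gammaRatio_neg_mul_eq_zero hα₁ hα₂ n.succ_ne_zero
  have htail : ∑ k ∈ Ico 2 (n + 2), gammaRatio (-α) k * gammaRatio α (n + 1 - k)
      = -(gammaRatio (-α) 0 * gammaRatio α (n + 1) + gammaRatio (-α) 1 * gammaRatio α n) := by
    rw [sum_Ico_eq_sub _ (by omega), hconv]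
    simp [sum_range_succ]
  have hf1 : gammaRatio (-α) 1 = -α * gammaRatio (-α) 0 := by
    simpa using gammaRatio.succ_mul_succ_eq (a := -α) (k := 0) (by simp; linarith)
  have hgn := gammaRatio.succ_mul_succ_eq (a := α) (k := n) (by positivity)
  have hΓ : Real.Gamma (2 - α) = (1 - α) * (-α) * gammaRatio (-α) 0 := by
    have h1 : Real.Gamma (1 - α) = -α * Real.Gamma (-α) := by
      rw [← Real.Gamma_add_one (by linarith)]; ring_nf
    have h2 : Real.Gamma (2 - α) = (1 - α) * Real.Gamma (1 - α) := by
      rw [← Real.Gamma_add_one (by linarith)]; ring_nf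
    rw [gammaRatio.zero, h2, h1, mul_assoc]
  have hΓ₀ : gammaRatio (-α) 0 ≠ 0 := by
    have := (Real.Gamma_pos_of_pos (by linarith : 0 < 2 - α)).ne'
    rw [hΓ] at this
    exact right_ne_zero_of_mul this
  have hΓα := (Real.Gamma_pos_of_pos (by linarith : 0 < α)).ne'
  have h1α : 1 - α ≠ 0 := by linarith
  calc totalRate α (n + 1)
      = (n + 1) / (Real.Gamma (2 - α) * Real.Gamma α)
          * ∑ k ∈ Ico 2 (n + 2), gammaRatio (-α) k * gammaRatio α (n + 1 - k) := by
        rw [totalRate_eq_sum_collRate, mul_sum]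
        refine sum_congr rfl fun k hk => ?_
        rw [collRate_eq_gammaRatio (by have := (mem_Ico.mp hk).2; omega) n.succ_ne_zero]
        push_cast
        ring
    _ = n * gammaRatio α n / (α * Real.Gamma α) := by
        rw [htail, hΓ, hf1]
        field_simp
        linear_combination hgn

theorem Vpmf_eq_gammaRatio (α : ℝ) (k : ℕ) :
    Vpmf α k = α / Real.Gamma (2 - α) * gammaRatio (-α) (k + 1) := by
  rw [Vpmf, gammaRatio]
  push_cast
  ring_nf

theorem Vpmf_pos (hα₀ : 0 < α) (hα₂ : α < 2) {k : ℕ} (hk : 1 ≤ k) : 0 < Vpmf α k := by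
  have : (1 : ℝ) ≤ k := by exact_mod_cast hk
  have := Real.Gamma_pos_of_pos (by linarith : 0 < 2 - α)
  have := Real.Gamma_pos_of_pos (by linarith : (0 : ℝ) < k + 1 - α)
  have := Real.Gamma_pos_of_pos (by positivity : (0 : ℝ) < k + 2)
  rw [Vpmf]
  positivity

theorem jumpProb_eq (hα₁ : 1 < α) (hα₂ : α < 2) {k : ℕ} (hk : 1 ≤ k) (n : ℕ) :
    jumpProb α (k + n + 1) (n + 1)
      = Vpmf α k * ((k + n + 1) / (k + n)) * (gammaRatio α n / gammaRatio α (k + n)) := by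
  have hkn : (k : ℝ) + n ≠ 0 := by
    have : (1 : ℝ) ≤ k := by exact_mod_cast hk
    positivity
  have hg := (gammaRatio.pos (by linarith : 0 < α) (k + n)).ne'
  have hΓ := (Real.Gamma_pos_of_pos (by linarith : 0 < 2 - α)).ne'
  have hΓα := (Real.Gamma_pos_of_pos (by linarith : 0 < α)).ne'
  have hα := (by linarith : α ≠ 0)
  rw [jumpProb, rateML, totalRate_succ hα₁ hα₂, Vpmf_eq_gammaRatio,
    show k + n + 1 - (n + 1) + 1 = k + 1 by omega,
    collRate_eq_gammaRatio (by omega) (by omega), show k + n + 1 - (k + 1) = n by omega]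
  push_cast
  field_simp

theorem Vpmf_sub_jumpProb_le (hα₁ : 1 < α) (hα₂ : α < 2) {m k : ℕ} (hk : 1 ≤ k)
    (hkm : k < m) :
    Vpmf α k - jumpProb α m (m - k) ≤ k * Vpmf α k / m := by
  obtain ⟨n, rfl⟩ : ∃ n, m = k + n + 1 := ⟨m - k - 1, by omega⟩
  have hkR : (1 : ℝ) ≤ k := by exact_mod_cast hk
  have hg := gammaRatio.pos (by linarith : 0 < α) (k + n)
  have hratio : ((n : ℝ) + 1) / (k + n + 1) ≤ gammaRatio α n / gammaRatio α (k + n) := by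
    rw [div_le_div_iff₀ (by positivity) hg]
    have := gammaRatio.succ_mul_le_succ_mul hα₁ hα₂.le (Nat.le_add_left n k)
    push_cast at this
    linarith
  have hfactor : (1 : ℝ) ≤ (k + n + 1) / (k + n) := by
    rw [one_le_div (by positivity)]
    linarith
  have hV := Vpmf_pos (by linarith) hα₂ hk
  rw [show k + n + 1 - k = n + 1 by omega, jumpProb_eq hα₁ hα₂ hk]
  calc Vpmf α k - Vpmf α k * ((k + n + 1) / (k + n)) * (gammaRatio α n / gammaRatio α (k + n))
      ≤ Vpmf α k - Vpmf α k * 1 * ((n + 1) / (k + n + 1)) := by gcongr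
    _ = k * Vpmf α k / ↑(k + n + 1) := by
        push_cast
        field_simp
        ring

end BetaCoalescent

section LawOfV

variable {α : ℝ}

def vLaw (α : ℝ) (k : ℕ) : ℝ := if 1 ≤ k then Vpmf α k else 0

-- `P(V ≥ k)` for `k ≥ 1`
def vTail (α : ℝ) (k : ℕ) : ℝ := gammaRatio (1 - α) k / Real.Gamma (2 - α)

-- `∑_{j ≥ k} j P(V = j)`
def vMeanTail (α : ℝ) (k : ℕ) : ℝ := (α * k / (α - 1) - 1) * vTail α k

theorem Vpmf_eq_mul_vTail (α : ℝ) (k : ℕ) : Vpmf α k = α * vTail α k / (k + 1) := by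
  have h := gammaRatio.succ_mul_succ (-α) k
  rw [neg_add_eq_sub] at h
  rw [Vpmf_eq_gammaRatio, vTail, ← h]
  field_simp

theorem succ_mul_vTail_succ (hα₁ : 1 < α) (hα₂ : α < 2) (k : ℕ) :
    (k + 1) * vTail α (k + 1) = (k + 1 - α) * vTail α k := by
  have hk : (k : ℝ) + (1 - α) ≠ 0 := by
    rw [← add_sub_assoc, sub_ne_zero]
    exact_mod_cast natCast_ne_of_one_lt_of_lt_two hα₁ hα₂ (k + 1)
  rw [vTail, vTail, ← mul_div_assoc, gammaRatio.succ_mul_succ_eq hk]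
  ring

theorem succ_mul_vTail_succ_eq_gammaRatio (α : ℝ) (k : ℕ) :
    (k + 1) * vTail α (k + 1) = gammaRatio (2 - α) k / Real.Gamma (2 - α) := by
  rw [vTail, ← mul_div_assoc, gammaRatio.succ_mul_succ]
  ring_nf

theorem Vpmf_eq_vTail_sub (hα₁ : 1 < α) (hα₂ : α < 2) (k : ℕ) :
    Vpmf α k = vTail α k - vTail α (k + 1) := by
  have h := succ_mul_vTail_succ hα₁ hα₂ k
  rw [Vpmf_eq_mul_vTail]
  field_simp
  linear_combination h

theorem vTail_one (hα₂ : α < 2) : vTail α 1 = 1 := by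
  have h := succ_mul_vTail_succ_eq_gammaRatio α 0
  rw [gammaRatio.zero, div_self (Real.Gamma_pos_of_pos (by linarith)).ne'] at h
  simpa using h

theorem vTail_succ_nonneg (hα₂ : α < 2) (k : ℕ) : 0 ≤ vTail α (k + 1) := by
  have h := succ_mul_vTail_succ_eq_gammaRatio α k
  have := gammaRatio.pos (by linarith : 0 < 2 - α) k
  have := Real.Gamma_pos_of_pos (by linarith : 0 < 2 - α)
  have : 0 ≤ (k + 1) * vTail α (k + 1) := by rw [h]; positivity
  exact nonneg_of_mul_nonneg_right this (by positivity)

theorem succ_mul_vTail_succ_le_one (hα₁ : 1 < α) (hα₂ : α < 2) (k : ℕ) :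
    (k + 1) * vTail α (k + 1) ≤ 1 := by
  have hΓ := Real.Gamma_pos_of_pos (by linarith : 0 < 2 - α)
  rw [succ_mul_vTail_succ_eq_gammaRatio, div_le_one hΓ, ← gammaRatio.zero]
  exact gammaRatio.antitone (by linarith) (by linarith) k.zero_le

theorem tendsto_vTail_atTop (hα₁ : 1 < α) (hα₂ : α < 2) :
    Tendsto (vTail α) atTop (nhds 0) := by
  refine (tendsto_add_atTop_iff_nat 1).mp
    (squeeze_zero (vTail_succ_nonneg hα₂) (fun k => ?_) tendsto_one_div_add_atTop_nhds_zero_nat)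
  rw [le_div_iff₀ (by positivity), mul_comm]
  exact succ_mul_vTail_succ_le_one hα₁ hα₂ k

theorem sum_range_succ_vLaw (hα₁ : 1 < α) (hα₂ : α < 2) (N : ℕ) :
    ∑ k ∈ range (N + 1), vLaw α k = 1 - vTail α (N + 1) := by
  induction N with
  | zero => simp [vLaw, vTail_one hα₂]
  | succ N ih =>
    rw [sum_range_succ, ih, vLaw, if_pos (by omega), Vpmf_eq_vTail_sub hα₁ hα₂]
    ring

theorem vLaw_nonneg (hα₁ : 1 < α) (hα₂ : α < 2) (k : ℕ) : 0 ≤ vLaw α k := by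
  unfold vLaw
  split_ifs with hk
  · exact (Vpmf_pos (by linarith) hα₂ hk).le
  · exact le_rfl

theorem hasSum_vLaw (hα₁ : 1 < α) (hα₂ : α < 2) : HasSum (vLaw α) 1 := by
  refine (hasSum_iff_tendsto_nat_of_nonneg (vLaw_nonneg hα₁ hα₂) 1).mpr
    ((tendsto_add_atTop_iff_nat 1).mp ?_)
  simp_rw [sum_range_succ_vLaw hα₁ hα₂]
  simpa using
    tendsto_const_nhds.sub ((tendsto_add_atTop_iff_nat 1).mpr (tendsto_vTail_atTop hα₁ hα₂))

theorem natCast_mul_Vpmf_eq_sub (hα₁ : 1 < α) (hα₂ : α < 2) (k : ℕ) :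
    k * Vpmf α k = vMeanTail α k - vMeanTail α (k + 1) := by
  have h := succ_mul_vTail_succ hα₁ hα₂ k
  have : α - 1 ≠ 0 := by linarith
  rw [Vpmf_eq_vTail_sub hα₁ hα₂, vMeanTail, vMeanTail]
  field_simp
  push_cast
  linear_combination h

theorem vMeanTail_zero (hα₁ : 1 < α) (hα₂ : α < 2) : vMeanTail α 0 = 1 / (α - 1) := by
  have h := natCast_mul_Vpmf_eq_sub hα₁ hα₂ 0
  have : α - 1 ≠ 0 := by linarith
  rw [Nat.cast_zero, zero_mul, zero_add, eq_comm, sub_eq_zero] at h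
  rw [h, vMeanTail, vTail_one hα₂]
  field_simp
  ring

theorem vMeanTail_nonneg (hα₁ : 1 < α) (hα₂ : α < 2) (k : ℕ) : 0 ≤ vMeanTail α k := by
  cases k with
  | zero => rw [vMeanTail_zero hα₁ hα₂]; exact (one_div_pos.mpr (by linarith)).le
  | succ k =>
    have hcoef : 0 ≤ α * (k + 1 : ℕ) / (α - 1) - 1 := by
      rw [sub_nonneg, one_le_div (by linarith)]
      push_cast
      nlinarith
    exact mul_nonneg hcoef (vTail_succ_nonneg hα₂ k)

theorem sum_range_natCast_mul_Vpmf_le (hα₁ : 1 < α) (hα₂ : α < 2) (N : ℕ) :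
    ∑ k ∈ range N, k * Vpmf α k ≤ 1 / (α - 1) := by
  simp_rw [natCast_mul_Vpmf_eq_sub hα₁ hα₂]
  rw [sum_range_sub', vMeanTail_zero hα₁ hα₂]
  linarith [vMeanTail_nonneg hα₁ hα₂ N]

end LawOfV

theorem abs_tsum_indicator_sub_le {ι : Type*} {p q : ι → ℝ} (hp : Summable p)
    (hq : Summable q) (hpq : ∑' i, p i = ∑' i, q i) (A : Set ι) :
    |∑' i, A.indicator p i - ∑' i, A.indicator q i| ≤ ∑' i, max (p i - q i) 0 := by
  have hd : Summable (p - q) := hp.sub hq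
  have hmax : Summable fun i => max (p i - q i) 0 :=
    hd.abs.of_nonneg_of_le (fun _ => le_max_right _ _)
      fun _ => max_le (le_abs_self _) (abs_nonneg _)
  have hle : ∀ B : Set ι, ∑' i, B.indicator (p - q) i ≤ ∑' i, max (p i - q i) 0 := fun B =>
    (hd.indicator B).tsum_le_tsum (fun i => by
      by_cases hi : i ∈ B <;> simp [Set.indicator_of_mem, Set.indicator_of_notMem, hi]) hmax
  have hsplit : ∑' i, A.indicator (p - q) i + ∑' i, Aᶜ.indicator (p - q) i = 0 := by
    rw [← (hd.indicator A).tsum_add (hd.indicator Aᶜ)]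
    simp_rw [Set.indicator_self_add_compl_apply, Pi.sub_apply]
    rw [hp.tsum_sub hq, hpq, sub_self]
  have hA : ∑' i, A.indicator p i - ∑' i, A.indicator q i = ∑' i, A.indicator (p - q) i := by
    rw [← (hp.indicator A).tsum_sub (hq.indicator A), Set.indicator_sub']
    rfl
  rw [hA, abs_le]
  constructor <;> linarith [hle A, hle Aᶜ]

section FirstJump

variable {α : ℝ}

def firstJumpLaw (α : ℝ) (m k : ℕ) : ℝ :=
  if 1 ≤ k ∧ k ≤ m - 1 then jumpProb α m (m - k) else 0

theorem hasSum_firstJumpLaw (hα₁ : 1 < α) (hα₂ : α < 2) {m : ℕ} (hm : 2 ≤ m) :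
    HasSum (firstJumpLaw α m) 1 := by
  have hzero : ∀ k ∉ Ico 1 m, firstJumpLaw α m k = 0 := fun k hk => by
    rw [mem_Ico] at hk
    rw [firstJumpLaw, if_neg (by omega)]
  have hsum : ∑ k ∈ Ico 1 m, firstJumpLaw α m k = ∑ l ∈ Ico 1 m, jumpProb α m l := by
    calc ∑ k ∈ Ico 1 m, firstJumpLaw α m k = ∑ k ∈ Ico 1 m, jumpProb α m (m - k) :=
          sum_congr rfl fun k hk => by rw [firstJumpLaw, if_pos (by have := mem_Ico.mp hk; omega)]
      _ = ∑ l ∈ Ico 1 m, jumpProb α m l := by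
          rw [sum_Ico_reflect _ _ (by omega), Nat.add_sub_cancel_left, Nat.add_sub_cancel]
  have htotal : totalRate α m ≠ 0 := by
    obtain ⟨n, rfl⟩ : ∃ n, m = n + 1 := ⟨m - 1, by omega⟩
    have : (1 : ℝ) ≤ n := by exact_mod_cast (by omega : 1 ≤ n)
    have := gammaRatio.pos (by linarith : 0 < α) n
    have := Real.Gamma_pos_of_pos (by linarith : 0 < α)
    rw [totalRate_succ hα₁ hα₂]
    positivity
  have hone : ∑ k ∈ Ico 1 m, firstJumpLaw α m k = 1 := by
    rw [hsum]
    simp_rw [jumpProb]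
    rw [← sum_div, ← totalRate, div_self htotal]
  exact hone ▸ hasSum_sum_of_ne_finset_zero hzero

theorem max_vLaw_sub_firstJumpLaw_le (hα₁ : 1 < α) (hα₂ : α < 2) {m : ℕ} (hm : m ≠ 0)
    (k : ℕ) :
    max (vLaw α k - firstJumpLaw α m k) 0 ≤ k * Vpmf α k / m := by
  obtain rfl | hk : k = 0 ∨ 1 ≤ k := by omega
  · simp [vLaw, firstJumpLaw]
  have hV := Vpmf_pos (by linarith) hα₂ hk
  have hmR : (0 : ℝ) < m := by positivity
  refine max_le ?_ (by positivity)
  rw [vLaw, firstJumpLaw, if_pos hk]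
  by_cases hkm : k < m
  · rw [if_pos ⟨hk, by omega⟩]
    exact Vpmf_sub_jumpProb_le hα₁ hα₂ hk hkm
  · rw [if_neg (by omega), sub_zero, le_div_iff₀ hmR, mul_comm]
    gcongr
    exact_mod_cast not_lt.mp hkm

theorem tsum_max_vLaw_sub_firstJumpLaw_le (hα₁ : 1 < α) (hα₂ : α < 2) {m : ℕ}
    (hm : m ≠ 0) :
    ∑' k, max (vLaw α k - firstJumpLaw α m k) 0 ≤ 1 / ((α - 1) * m) := by
  refine Real.tsum_le_of_sum_range_le (fun _ => le_max_right _ _) fun N => ?_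
  calc ∑ k ∈ range N, max (vLaw α k - firstJumpLaw α m k) 0
      ≤ ∑ k ∈ range N, k * Vpmf α k / m :=
        sum_le_sum fun k _ => max_vLaw_sub_firstJumpLaw_le hα₁ hα₂ hm k
    _ = (∑ k ∈ range N, k * Vpmf α k) / m := by rw [sum_div]
    _ ≤ 1 / (α - 1) / m := by gcongr; exact sum_range_natCast_mul_Vpmf_le hα₁ hα₂ N
    _ = 1 / ((α - 1) * m) := by rw [div_div]

end FirstJump

/-- For every integer `m ≥ 2`,
`∑_{k=1}^∞ (P(V = k) - P_{m,m-k})⁺ ≤ 1/((α-1)m)` (with `P_{m,m-k} = 0` for `k ≥ m`);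
in particular, the total variation distance between the law of `V` and the first-jump
law of the chain from `m` is at most `1/((α-1)m)`. -/
theorem pmf_difference_bound (α : ℝ) (hα1 : 1 < α) (hα2 : α < 2) (m : ℕ) (hm : 2 ≤ m) :
    (∑' k : ℕ, if 1 ≤ k then
        max (Vpmf α k - (if k ≤ m - 1 then jumpProb α m (m - k) else 0)) 0 else 0)
      ≤ 1 / ((α - 1) * m) ∧
    ∀ A : Set ℕ,
      |(∑' k : ℕ, if k ∈ A ∧ 1 ≤ k then Vpmf α k else 0)
        - (∑' k : ℕ, if k ∈ A ∧ 1 ≤ k ∧ k ≤ m - 1 then jumpProb α m (m - k) else 0)|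
      ≤ 1 / ((α - 1) * m) := by
  have hbound := tsum_max_vLaw_sub_firstJumpLaw_le hα1 hα2 (by omega : m ≠ 0)
  have hmax : ∀ k : ℕ, (if 1 ≤ k then
      max (Vpmf α k - (if k ≤ m - 1 then jumpProb α m (m - k) else 0)) 0 else 0)
        = max (vLaw α k - firstJumpLaw α m k) 0 := fun k => by
    by_cases hk : 1 ≤ k <;> simp [vLaw, firstJumpLaw, hk]
  refine ⟨by simpa only [hmax] using hbound, fun A => ?_⟩
  have hV : ∀ k : ℕ, (if k ∈ A ∧ 1 ≤ k then Vpmf α k else 0) = A.indicator (vLaw α) k :=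
    fun k => by by_cases hk : k ∈ A <;> simp [Set.indicator, vLaw, hk]
  have hJ : ∀ k : ℕ, (if k ∈ A ∧ 1 ≤ k ∧ k ≤ m - 1 then jumpProb α m (m - k) else 0)
      = A.indicator (firstJumpLaw α m) k :=
    fun k => by by_cases hk : k ∈ A <;> simp [Set.indicator, firstJumpLaw, hk]
  simp only [hV, hJ]
  have hp := hasSum_vLaw hα1 hα2
  have hq := hasSum_firstJumpLaw hα1 hα2 hm
  exact (abs_tsum_indicator_sub_le hp.summable hq.summable
    (hp.tsum_eq.trans hq.tsum_eq.symm) A).trans hbound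
end
end

section
/- Let a, b > 0, let w be a positive integer and p ∈ [0,1] with w·p ≤ 1/(α−1). Let (ζ_j)_{j≥0} be i.i.d. nonnegative random variables with Laplace transform E[e^{−λζ_j}] = exp(−λ^{α−1}) for all λ ≥ 0, and let (I_j)_{j≥0} be i.i.d. Bernoulli(p) random variables independent of (ζ_j). Set W = ∑_{j=0}^{w} (a + b·ζ_j)·I_j. Then there is a constant c < ∞ depending only on a, b and α (not on w, p or t) such that P(W > t) ≤ c·t^{1−α} for all t > 0. -/
/-! Put `l = 1 / t`. Markov's inequality for the bounded function `1 - exp (-l W)` gives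
`(1 - e⁻¹) P(W > t) ≤ E[1 - exp (-l W)]`. As `u ↦ 1 - exp (-u)` is subadditive on `[0, ∞)`, this
is at most the sum over `j` of `E[1 - exp (-l (a + b ζ_j) I_j)] = p (1 - exp (-l a - (l b)^(α-1)))
≤ p (l a + (l b)^(α-1))`, using the independence of `ζ_j` and `I_j` and the Laplace transform of
`ζ_j`. For `t ≥ 1` and `α ≤ 2` both `l a` and `(l b)^(α-1)` are at most multiples of `t^(1-α)`,
and `(w + 1) p ≤ 1 / (α - 1) + 1`. -/

open MeasureTheory ProbabilityTheory Real

theorem one_sub_exp_neg_add_le {x y : ℝ} (hx : 0 ≤ x) (hy : 0 ≤ y) :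
    1 - exp (-(x + y)) ≤ (1 - exp (-x)) + (1 - exp (-y)) := by
  rw [neg_add, exp_add]
  nlinarith [mul_nonneg (sub_nonneg.2 (exp_le_one_iff.2 (neg_nonpos.2 hx)))
    (sub_nonneg.2 (exp_le_one_iff.2 (neg_nonpos.2 hy)))]

theorem one_sub_exp_neg_sum_le {ι : Type*} (s : Finset ι) {x : ι → ℝ} (hx : ∀ i ∈ s, 0 ≤ x i) :
    1 - exp (-∑ i ∈ s, x i) ≤ ∑ i ∈ s, (1 - exp (-x i)) :=
  Finset.le_sum_of_subadditive_on_pred (fun u => 1 - exp (-u)) (0 ≤ ·) (by simp)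
    (fun _ _ => one_sub_exp_neg_add_le) (fun _ _ => add_nonneg) x hx

theorem inv_mul_add_inv_mul_rpow_le {α t a b : ℝ} (hα : α ≤ 2) (ht : 1 ≤ t) (ha : 0 ≤ a)
    (hb : 0 ≤ b) : t⁻¹ * a + (t⁻¹ * b) ^ (α - 1) ≤ (a + b ^ (α - 1)) * t ^ (1 - α) := by
  have ht0 : 0 < t := by linarith
  have hinv : t⁻¹ ≤ t ^ (1 - α) := by
    rw [← rpow_neg_one]
    exact rpow_le_rpow_of_exponent_le ht (by linarith)
  have hpow : (t⁻¹ * b) ^ (α - 1) = b ^ (α - 1) * t ^ (1 - α) := by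
    rw [mul_rpow (inv_nonneg.2 ht0.le) hb, inv_rpow ht0.le, ← rpow_neg ht0.le, neg_sub, mul_comm]
  rw [hpow]
  linarith [mul_le_mul_of_nonneg_right hinv ha]

section Probability

variable {Ω : Type*} [MeasurableSpace Ω] {μ : Measure Ω}

theorem integral_exp_neg_mul_affine {ζ : Ω → ℝ} {α : ℝ}
    (hLap : ∀ l : ℝ, 0 ≤ l → ∫ ω, exp (-l * ζ ω) ∂μ = exp (-l ^ (α - 1)))
    {a b l : ℝ} (hl : 0 ≤ l) (hb : 0 ≤ b) :
    ∫ ω, exp (-(l * (a + b * ζ ω))) ∂μ = exp (-(l * a + (l * b) ^ (α - 1))) := by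
  have hsplit : ∀ ω, exp (-(l * (a + b * ζ ω))) = exp (-(l * a)) * exp (-(l * b) * ζ ω) := by
    intro ω
    rw [← exp_add]
    ring_nf
  simp_rw [hsplit]
  rw [integral_const_mul, hLap (l * b) (mul_nonneg hl hb), ← exp_add, neg_add]

theorem indepFun_of_indep_iSup_comap {ι β γ : Type*} [mβ : MeasurableSpace β]
    [mγ : MeasurableSpace γ] {f : ι → Ω → β} {g : ι → Ω → γ}
    (h : Indep (⨆ i, mβ.comap (f i)) (⨆ i, mγ.comap (g i)) μ) (i j : ι) :
    IndepFun (f i) (g j) μ :=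
  indep_of_indep_of_le_left (indep_of_indep_of_le_right h (le_iSup (fun j => mγ.comap (g j)) j))
    (le_iSup (fun i => mβ.comap (f i)) i)

variable [IsProbabilityMeasure μ]

theorem integrable_one_sub_exp_neg {X : Ω → ℝ} (hX : Measurable X) (h0 : 0 ≤ᵐ[μ] X) :
    Integrable (fun ω => 1 - exp (-X ω)) μ := by
  refine Integrable.mono' (integrable_const 1) (by fun_prop) ?_
  filter_upwards [h0] with ω hω
  rw [norm_of_nonneg (sub_nonneg.2 (exp_le_one_iff.2 (neg_nonpos.2 hω)))]
  linarith [exp_pos (-X ω)]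

theorem integral_one_sub_exp_neg_sum_le {ι : Type*} (s : Finset ι) {X : ι → Ω → ℝ}
    (hX : ∀ i, Measurable (X i)) (h0 : ∀ i, 0 ≤ᵐ[μ] X i) :
    ∫ ω, (1 - exp (-∑ i ∈ s, X i ω)) ∂μ ≤ ∑ i ∈ s, ∫ ω, (1 - exp (-X i ω)) ∂μ := by
  rw [← integral_finsetSum _ fun i _ => integrable_one_sub_exp_neg (hX i) (h0 i)]
  refine integral_mono_ae (integrable_one_sub_exp_neg (Finset.measurable_sum _ fun i _ => hX i)
    ((s.eventually_all.2 fun i _ => h0 i).mono fun ω hω => Finset.sum_nonneg hω))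
    (integrable_finsetSum _ fun i _ => integrable_one_sub_exp_neg (hX i) (h0 i)) ?_
  filter_upwards [s.eventually_all.2 fun i _ => h0 i] with ω hω
  exact one_sub_exp_neg_sum_le s hω

/-- Markov's inequality for `1 - exp (-X / t)`, which exceeds `1 - exp (-1)` on `{t < X}`. -/
theorem measure_lt_le_of_integral_one_sub_exp_le {X : Ω → ℝ} (hX : Measurable X)
    (h0 : 0 ≤ᵐ[μ] X) {t B : ℝ} (ht : 0 < t)
    (hB : ∫ ω, (1 - exp (-(t⁻¹ * X ω))) ∂μ ≤ (1 - exp (-1)) * B) :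
    μ {ω | t < X ω} ≤ ENNReal.ofReal B := by
  have hε : 0 < 1 - exp (-1) := sub_pos.2 (exp_lt_one_iff.2 (by norm_num))
  have hsub : {ω | t < X ω} ⊆ {ω | 1 - exp (-1) ≤ 1 - exp (-(t⁻¹ * X ω))} := by
    intro ω hω
    have : 1 < t⁻¹ * X ω := by rw [inv_mul_eq_div, one_lt_div ht]; exact hω
    simp only [Set.mem_ofPred_eq, sub_le_sub_iff_left, exp_le_exp]
    linarith
  have hY0 : 0 ≤ᵐ[μ] fun ω => t⁻¹ * X ω := h0.mono fun ω hω => mul_nonneg (inv_nonneg.2 ht.le) hω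
  have hmarkov := mul_meas_ge_le_integral_of_nonneg
    (hY0.mono fun ω hω => sub_nonneg.2 (exp_le_one_iff.2 (neg_nonpos.2 hω)))
    (integrable_one_sub_exp_neg (hX.const_mul t⁻¹) hY0) (1 - exp (-1))
  calc μ {ω | t < X ω} ≤ μ {ω | 1 - exp (-1) ≤ 1 - exp (-(t⁻¹ * X ω))} := measure_mono hsub
    _ = ENNReal.ofReal (μ.real {ω | 1 - exp (-1) ≤ 1 - exp (-(t⁻¹ * X ω))}) :=
      (ofReal_measureReal).symm
    _ ≤ ENNReal.ofReal B :=
      ENNReal.ofReal_le_ofReal (le_of_mul_le_mul_left (hmarkov.trans hB) hε)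

theorem ae_eq_zero_or_eq_one_of_bernoulli {I : Ω → ℕ} (hI : Measurable I) {p : ℝ}
    (hp0 : 0 ≤ p) (hp1 : p ≤ 1) (h1 : μ {ω | I ω = 1} = ENNReal.ofReal p)
    (h0 : μ {ω | I ω = 0} = ENNReal.ofReal (1 - p)) :
    ∀ᵐ ω ∂μ, I ω = 0 ∨ I ω = 1 := by
  have hdisj : Disjoint {ω | I ω = 0} {ω | I ω = 1} :=
    Set.disjoint_left.2 fun ω (hω0 : I ω = 0) (hω1 : I ω = 1) => by omega
  have hunion : μ ({ω | I ω = 0} ∪ {ω | I ω = 1}) = 1 := by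
    rw [measure_union hdisj (hI (measurableSet_singleton 1)), h0, h1,
      ← ENNReal.ofReal_add (by linarith) hp0]
    norm_num
  exact ae_iff.2 ((prob_compl_eq_zero_iff
    ((hI (measurableSet_singleton 0)).union (hI (measurableSet_singleton 1)))).2 hunion)

theorem integral_natCast_of_bernoulli {I : Ω → ℕ} (hI : Measurable I) {p : ℝ}
    (hp0 : 0 ≤ p) (hp1 : p ≤ 1) (h1 : μ {ω | I ω = 1} = ENNReal.ofReal p)
    (h0 : μ {ω | I ω = 0} = ENNReal.ofReal (1 - p)) :
    ∫ ω, (I ω : ℝ) ∂μ = p := by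
  have hmeas : MeasurableSet {ω | I ω = 1} := hI (measurableSet_singleton 1)
  have hind : (fun ω => (I ω : ℝ)) =ᵐ[μ] {ω | I ω = 1}.indicator 1 := by
    filter_upwards [ae_eq_zero_or_eq_one_of_bernoulli hI hp0 hp1 h1 h0] with ω hω
    rcases hω with hω | hω <;> simp [hω]
  rw [integral_congr_ae hind, integral_indicator_one hmeas,
    measureReal_def, h1, ENNReal.toReal_ofReal hp0]

theorem integral_one_sub_exp_neg_thinned_le {ζ : Ω → ℝ} {I : Ω → ℕ} (hζ : Measurable ζ)
    (hI : Measurable I) (hind : IndepFun ζ I μ) {α : ℝ}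
    (hLap : ∀ l : ℝ, 0 ≤ l → ∫ ω, exp (-l * ζ ω) ∂μ = exp (-l ^ (α - 1)))
    {p : ℝ} (hp0 : 0 ≤ p) (hp1 : p ≤ 1) (h1 : μ {ω | I ω = 1} = ENNReal.ofReal p)
    (h0 : μ {ω | I ω = 0} = ENNReal.ofReal (1 - p)) {a b l : ℝ} (hl : 0 ≤ l) (hb : 0 ≤ b) :
    ∫ ω, (1 - exp (-(l * ((a + b * ζ ω) * (I ω : ℝ))))) ∂μ
      ≤ p * (l * a + (l * b) ^ (α - 1)) := by
  set x := l * a + (l * b) ^ (α - 1)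
  have hfactor : (fun ω => 1 - exp (-(l * ((a + b * ζ ω) * (I ω : ℝ)))))
      =ᵐ[μ] fun ω => (1 - exp (-(l * (a + b * ζ ω)))) * (I ω : ℝ) := by
    filter_upwards [ae_eq_zero_or_eq_one_of_bernoulli hI hp0 hp1 h1 h0] with ω hω
    rcases hω with hω | hω <;> simp [hω]
  have hLapAffine := integral_exp_neg_mul_affine hLap (a := a) hl hb
  have hindep : IndepFun (fun ω => 1 - exp (-(l * (a + b * ζ ω)))) (fun ω => (I ω : ℝ)) μ :=
    hind.comp (φ := fun z => 1 - exp (-(l * (a + b * z)))) (ψ := fun n : ℕ => (n : ℝ))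
      (by fun_prop) measurable_from_top
  calc ∫ ω, (1 - exp (-(l * ((a + b * ζ ω) * (I ω : ℝ))))) ∂μ
      = (∫ ω, (1 - exp (-(l * (a + b * ζ ω)))) ∂μ) * ∫ ω, (I ω : ℝ) ∂μ := by
        rw [integral_congr_ae hfactor]
        exact hindep.integral_mul_eq_mul_integral (by fun_prop) (by fun_prop)
    _ = (1 - exp (-x)) * p := by
        rw [integral_sub (integrable_const 1)
          (.of_integral_ne_zero (hLapAffine ▸ (exp_pos _).ne')), hLapAffine,
          integral_natCast_of_bernoulli hI hp0 hp1 h1 h0, integral_const, probReal_univ,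
          smul_eq_mul, mul_one]
    _ ≤ p * x := by
        rw [mul_comm]
        exact mul_le_mul_of_nonneg_left (by linarith [add_one_le_exp (-x)]) hp0

theorem integral_one_sub_exp_neg_thinned_sum_le {ι : Type*} (s : Finset ι) {ζ : ι → Ω → ℝ}
    {I : ι → Ω → ℕ} (hζ : ∀ j, Measurable (ζ j)) (hI : ∀ j, Measurable (I j))
    (hζ0 : ∀ j, ∀ᵐ ω ∂μ, 0 ≤ ζ j ω) (hind : ∀ j, IndepFun (ζ j) (I j) μ) {α : ℝ}
    (hLap : ∀ j, ∀ l : ℝ, 0 ≤ l → ∫ ω, exp (-l * ζ j ω) ∂μ = exp (-l ^ (α - 1)))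
    {p : ℝ} (hp0 : 0 ≤ p) (hp1 : p ≤ 1) (h1 : ∀ j, μ {ω | I j ω = 1} = ENNReal.ofReal p)
    (h0 : ∀ j, μ {ω | I j ω = 0} = ENNReal.ofReal (1 - p)) {a b l : ℝ} (ha : 0 ≤ a)
    (hb : 0 ≤ b) (hl : 0 ≤ l) :
    ∫ ω, (1 - exp (-(l * ∑ j ∈ s, (a + b * ζ j ω) * (I j ω : ℝ)))) ∂μ
      ≤ s.card * p * (l * a + (l * b) ^ (α - 1)) := by
  simp_rw [Finset.mul_sum]
  calc _ ≤ ∑ j ∈ s, ∫ ω, (1 - exp (-(l * ((a + b * ζ j ω) * (I j ω : ℝ))))) ∂μ :=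
        integral_one_sub_exp_neg_sum_le s (fun j => by have := hζ j; have := hI j; fun_prop)
          fun j => (hζ0 j).mono fun ω hω => by positivity
    _ ≤ ∑ _j ∈ s, p * (l * a + (l * b) ^ (α - 1)) := Finset.sum_le_sum fun j _ =>
        integral_one_sub_exp_neg_thinned_le (hζ j) (hI j) (hind j) (hLap j) hp0 hp1 (h1 j) (h0 j)
          hl hb
    _ = s.card * p * (l * a + (l * b) ^ (α - 1)) := by
        rw [Finset.sum_const, nsmul_eq_mul, mul_assoc]

end Probability

/-- Let `a, b > 0`. There is a constant `c` depending only on `a`, `b` and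
`α` such that for any positive integer `w` and `p ∈ [0,1]` with `w·p ≤ 1/(α-1)`, any
i.i.d. nonnegative `(ζ_j)` with Laplace transform `exp(-λ^{α-1})`, and any i.i.d.
Bernoulli(`p`) family `(I_j)` independent of `(ζ_j)`, the random variable
`W = ∑_{j=0}^w (a + b·ζ_j)·I_j` satisfies `P(W > t) ≤ c·t^{1-α}` for all `t > 0`. -/
theorem thinned_stable_sum_tail (α : ℝ) (hα1 : 1 < α) (hα2 : α < 2)
    (a b : ℝ) (ha : 0 < a) (hb : 0 < b) :
    ∃ c : ℝ, ∀ (w : ℕ), 1 ≤ w → ∀ p : ℝ, 0 ≤ p → p ≤ 1 → (w : ℝ) * p ≤ 1 / (α - 1) →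
      ∀ (Ω : Type) (_ : MeasurableSpace Ω) (μ : Measure Ω), IsProbabilityMeasure μ →
      ∀ (ζ : ℕ → Ω → ℝ) (I : ℕ → Ω → ℕ),
        (∀ j, Measurable (ζ j)) →
        (∀ j, Measurable (I j)) →
        (∀ j, ∀ᵐ ω ∂μ, 0 ≤ ζ j ω) →
        iIndepFun ζ μ →
        (∀ j, ∀ l : ℝ, 0 ≤ l → ∫ ω, Real.exp (-l * ζ j ω) ∂μ = Real.exp (-l ^ (α - 1))) →
        iIndepFun I μ →
        (∀ j, μ {ω | I j ω = 1} = ENNReal.ofReal p ∧ μ {ω | I j ω = 0} = ENNReal.ofReal (1 - p)) →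
        Indep (⨆ j, MeasurableSpace.comap (ζ j) inferInstance)
              (⨆ j, MeasurableSpace.comap (I j) inferInstance) μ →
        ∀ t : ℝ, 0 < t →
          μ {ω | t < ∑ j ∈ Finset.range (w + 1), (a + b * ζ j ω) * (I j ω : ℝ)}
            ≤ ENNReal.ofReal (c * t ^ (1 - α)) := by
  have hε : 0 < 1 - exp (-1) := sub_pos.2 (exp_lt_one_iff.2 (by norm_num))
  set K := (1 / (α - 1) + 1) * (a + b ^ (α - 1)) / (1 - exp (-1))
  refine ⟨max 1 K, ?_⟩
  intro w _ p hp0 hp1 hwp Ω _ μ _ ζ I hζ hI hζ0 _ hLap _ hIber hind t ht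
  rcases le_or_gt t 1 with ht1 | ht1
  · have : 1 ≤ t ^ (1 - α) := one_le_rpow_of_pos_of_le_one_of_nonpos ht ht1 (by linarith)
    exact prob_le_one.trans (ENNReal.one_le_ofReal.2 (by nlinarith [le_max_left 1 K]))
  refine measure_lt_le_of_integral_one_sub_exp_le
    (Finset.measurable_sum _ fun j _ => by have := hζ j; have := hI j; fun_prop)
    (((Finset.range (w + 1)).eventually_all.2 fun j _ => hζ0 j).mono fun ω hω =>
      Finset.sum_nonneg fun j hj => by have := hω j hj; positivity) ht ?_
  calc _ ≤ (w + 1 : ℕ) * p * (t⁻¹ * a + (t⁻¹ * b) ^ (α - 1)) := by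
        simpa only [Finset.card_range] using
          integral_one_sub_exp_neg_thinned_sum_le (Finset.range (w + 1)) hζ hI hζ0
            (fun j => indepFun_of_indep_iSup_comap hind j j) hLap
            hp0 hp1 (fun j => (hIber j).1) (fun j => (hIber j).2) ha.le hb.le (inv_nonneg.2 ht.le)
    _ ≤ (1 / (α - 1) + 1) * ((a + b ^ (α - 1)) * t ^ (1 - α)) := by
        exact mul_le_mul (by push_cast; rw [add_mul, one_mul]; linarith)
          (inv_mul_add_inv_mul_rpow_le hα2.le ht1.le ha.le hb.le) (by positivity) (by positivity)
    _ = (1 - exp (-1)) * (K * t ^ (1 - α)) := by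
        simp only [K]
        field_simp
    _ ≤ (1 - exp (-1)) * (max 1 K * t ^ (1 - α)) := by
        gcongr
        exact le_max_right _ _
end
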